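/- arXiv:2311.05644 — 4 statements merged into one kernel-verified Lean document; each statement's English description precedes it below -/
import Mathlib

section
/- For probability vectors P and Q in the standard simplex of R^n with the support of P contained in the support of Q, the relative entropy RE(P,Q) = Σ_{i ∈ supp(P)} P(i) ln(P(i)/Q(i)) satisfies RE(P,Q) ≥ ‖P − Q‖², where ‖·‖ is the Euclidean norm. -/
/-!
The bound is Pinsker's inequality `RE(P, Q) ≥ ‖P - Q‖₁² / 2` followed by `‖a‖₂² ≤ ‖a‖₁² / 2`,
which holds for every `a` with `∑ aᵢ = 0` because then each `|aᵢ| ≤ ‖a‖₁ / 2`.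
Pinsker's inequality comes from the pointwise bound `x log x - x + 1 ≥ 3 (x - 1)² / (2 (x + 2))`,
i.e. `p log (p / q) ≥ p - q + 3 (p - q)² / (2 (p + 2q))`: summed over `i`, the linear terms cancel
and Sedrakyan's form of Cauchy–Schwarz, with `∑ (pᵢ + 2 qᵢ) = 3`, bounds the quadratic terms
below by `‖P - Q‖₁² / 2`. The pointwise bound is proved by comparing derivatives, using the
classical `log x ≥ 2 (x - 1) / (x + 1)` for `x ≥ 1` (reversed for `x ≤ 1`).
-/

open scoped Classical

open Real Set Finset InformationTheory

theorem le_of_hasDerivAt_of_sub_mul_nonneg {f f' : ℝ → ℝ} {a c x : ℝ} (hc : a < c) (hx : a < x)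
    (hf : ∀ y, a < y → HasDerivAt f (f' y) y) (hsign : ∀ y, a < y → 0 ≤ (y - c) * f' y) :
    f c ≤ f x := by
  have hcont : ∀ b d, a < b → ContinuousOn f (Icc b d) := fun b d hb y hy =>
    (hf y (hb.trans_le hy.1)).continuousAt.continuousWithinAt
  have hderiv : ∀ b d, a < b → ∀ y ∈ interior (Icc b d),
      HasDerivWithinAt f (f' y) (interior (Icc b d)) y := fun b d hb y hy => by
    rw [interior_Icc] at hy
    exact (hf y (hb.trans hy.1)).hasDerivWithinAt
  rcases le_total c x with hcx | hxc
  · refine monotoneOn_of_hasDerivWithinAt_nonneg (f' := f') (convex_Icc c x) (hcont c x hc)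
      (hderiv c x hc) (fun y hy => ?_) (left_mem_Icc.2 hcx) (right_mem_Icc.2 hcx) hcx
    rw [interior_Icc] at hy
    exact nonneg_of_mul_nonneg_right (hsign y (hc.trans hy.1)) (sub_pos.2 hy.1)
  · refine antitoneOn_of_hasDerivWithinAt_nonpos (f' := f') (convex_Icc x c) (hcont x c hx)
      (hderiv x c hx) (fun y hy => ?_) (left_mem_Icc.2 hxc) (right_mem_Icc.2 hxc) hxc
    rw [interior_Icc] at hy
    exact nonpos_of_mul_nonneg_right (hsign y (hx.trans hy.1)) (sub_neg.2 hy.2)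

theorem monotoneOn_log_sub_two_mul_sub_one_div_add_one :
    MonotoneOn (fun x => log x - 2 * (x - 1) / (x + 1)) (Ioi 0) := by
  have hderiv : ∀ x : ℝ, 0 < x →
      HasDerivAt (fun x => log x - 2 * (x - 1) / (x + 1)) ((x - 1) ^ 2 / (x * (x + 1) ^ 2)) x := by
    intro x hx
    have h := (hasDerivAt_log hx.ne').sub
      ((((hasDerivAt_id x).sub_const 1).const_mul 2).div ((hasDerivAt_id x).add_const 1)
        (by simp; linarith))
    refine h.congr_deriv ?_
    simp only [id]
    field_simp
    ring
  refine monotoneOn_of_hasDerivWithinAt_nonneg (f' := fun x => (x - 1) ^ 2 / (x * (x + 1) ^ 2))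
    (convex_Ioi 0)
    (fun x hx => (hderiv x hx).continuousAt.continuousWithinAt) (fun x hx => ?_) (fun x hx => ?_)
  · rw [interior_Ioi] at hx
    exact (hderiv x hx).hasDerivWithinAt
  · rw [interior_Ioi] at hx
    have : (0 : ℝ) < x := hx
    positivity

theorem sub_one_mul_log_sub_nonneg {x : ℝ} (hx : 0 < x) :
    0 ≤ (x - 1) * (log x - 2 * (x - 1) / (x + 1)) := by
  have hmono := monotoneOn_log_sub_two_mul_sub_one_div_add_one
  rcases le_total 1 x with h | h
  · have := hmono (mem_Ioi.2 one_pos) (mem_Ioi.2 hx) h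
    simp only [log_one, sub_self, mul_zero, zero_div] at this
    exact mul_nonneg (sub_nonneg.2 h) this
  · have := hmono (mem_Ioi.2 hx) (mem_Ioi.2 one_pos) h
    simp only [log_one, sub_self, mul_zero, zero_div] at this
    exact mul_nonneg_of_nonpos_of_nonpos (sub_nonpos.2 h) this

theorem three_mul_sq_sub_one_div_le_klFun {x : ℝ} (hx : 0 ≤ x) :
    3 * (x - 1) ^ 2 / (2 * (x + 2)) ≤ klFun x := by
  rcases hx.eq_or_lt with rfl | hx
  · norm_num [klFun_zero]
  set φ : ℝ → ℝ := fun x => log x - 3 * (x - 1) * (x + 5) / (2 * (x + 2) ^ 2)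
  have hderiv : ∀ y : ℝ, 0 < y →
      HasDerivAt (fun x => klFun x - 3 * (x - 1) ^ 2 / (2 * (x + 2))) (φ y) y := by
    intro y hy
    have h := (hasDerivAt_klFun hy.ne').sub
      (((((hasDerivAt_id y).sub_const 1).pow 2).const_mul 3).div
        (((hasDerivAt_id y).add_const 2).const_mul 2) (by simp; linarith))
    refine h.congr_deriv ?_
    simp only [φ, id, Pi.pow_apply, Nat.cast_ofNat]
    field_simp
    ring
  have hsign : ∀ y : ℝ, 0 < y → 0 ≤ (y - 1) * φ y := by
    intro y hy
    have key : (y - 1) * φ y = (y - 1) * (log y - 2 * (y - 1) / (y + 1))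
        + (y - 1) ^ 4 / (2 * (y + 1) * (y + 2) ^ 2) := by
      simp only [φ]
      field_simp
      ring
    rw [key]
    have := sub_one_mul_log_sub_nonneg hy
    positivity
  have := le_of_hasDerivAt_of_sub_mul_nonneg one_pos hx hderiv hsign
  norm_num at this
  linarith [klFun_one]

theorem sub_add_three_mul_sq_div_le_mul_log_div {p q : ℝ} (hp : 0 ≤ p) (hq : 0 < q) :
    p - q + 3 * (p - q) ^ 2 / (2 * (p + 2 * q)) ≤ p * log (p / q) := by
  have h := mul_le_mul_of_nonneg_left (three_mul_sq_sub_one_div_le_klFun (div_nonneg hp hq.le))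
    hq.le
  have hq' := hq.ne'
  have hpq : p + 2 * q ≠ 0 := by linarith
  have lhs : q * (3 * (p / q - 1) ^ 2 / (2 * (p / q + 2)))
      = 3 * (p - q) ^ 2 / (2 * (p + 2 * q)) := by
    field_simp
  have rhs : q * klFun (p / q) = p * log (p / q) + q - p := by
    rw [klFun_apply]
    field_simp
  linarith

theorem two_mul_abs_le_sum_abs {ι : Type*} {s : Finset ι} {a : ι → ℝ} (ha : ∑ i ∈ s, a i = 0)
    {i : ι} (hi : i ∈ s) : 2 * |a i| ≤ ∑ j ∈ s, |a j| := by
  have hsplit := add_sum_erase s a hi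
  have hsplit_abs := add_sum_erase s (fun j => |a j|) hi
  have : |a i| ≤ ∑ j ∈ s.erase i, |a j| := by
    rw [show a i = -∑ j ∈ s.erase i, a j by linarith, abs_neg]
    exact abs_sum_le_sum_abs _ _
  linarith

theorem sum_sq_le_sq_sum_abs_div_two {ι : Type*} {s : Finset ι} {a : ι → ℝ}
    (ha : ∑ i ∈ s, a i = 0) : ∑ i ∈ s, a i ^ 2 ≤ (∑ i ∈ s, |a i|) ^ 2 / 2 :=
  calc ∑ i ∈ s, a i ^ 2 = ∑ i ∈ s, |a i| * |a i| := by simp only [← sq, sq_abs]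
    _ ≤ ∑ i ∈ s, |a i| * ((∑ j ∈ s, |a j|) / 2) := by
      gcongr with i hi
      linarith [two_mul_abs_le_sum_abs ha hi]
    _ = (∑ i ∈ s, |a i|) ^ 2 / 2 := by rw [← sum_mul]; ring

theorem sq_sum_abs_sub_div_two_le_sum_mul_log_div {ι : Type*} {s : Finset ι} {P Q : ι → ℝ}
    (hP : ∀ i ∈ s, 0 ≤ P i) (hQ : ∀ i ∈ s, 0 < Q i)
    (hPs : ∑ i ∈ s, P i = 1) (hQs : ∑ i ∈ s, Q i = 1) :
    (∑ i ∈ s, |P i - Q i|) ^ 2 / 2 ≤ ∑ i ∈ s, P i * log (P i / Q i) := by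
  have hw : ∀ i ∈ s, 0 < P i + 2 * Q i := fun i hi => by linarith [hP i hi, hQ i hi]
  have hws : ∑ i ∈ s, (P i + 2 * Q i) = 3 := by
    rw [sum_add_distrib, ← mul_sum, hPs, hQs]; norm_num
  have hdiff : ∑ i ∈ s, (P i - Q i) = 0 := by rw [sum_sub_distrib, hPs, hQs, sub_self]
  calc (∑ i ∈ s, |P i - Q i|) ^ 2 / 2
      = 3 / 2 * ((∑ i ∈ s, |P i - Q i|) ^ 2 / ∑ i ∈ s, (P i + 2 * Q i)) := by
        rw [hws]; ring
    _ ≤ 3 / 2 * ∑ i ∈ s, |P i - Q i| ^ 2 / (P i + 2 * Q i) := by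
        gcongr; exact sq_sum_div_le_sum_sq_div s _ hw
    _ = ∑ i ∈ s, (P i - Q i + 3 * (P i - Q i) ^ 2 / (2 * (P i + 2 * Q i))) := by
        rw [sum_add_distrib, hdiff, zero_add, mul_sum]
        refine sum_congr rfl fun i _ => ?_
        rw [sq_abs, div_mul_div_comm]
    _ ≤ ∑ i ∈ s, P i * log (P i / Q i) :=
        sum_le_sum fun i hi => sub_add_three_mul_sq_div_le_mul_log_div (hP i hi) (hQ i hi)

theorem stmt0 (n : ℕ) (P Q : Fin n → ℝ)
    (hP : ∀ i, 0 ≤ P i) (hQ : ∀ i, 0 ≤ Q i)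
    (hPs : ∑ i, P i = 1) (hQs : ∑ i, Q i = 1)
    (hsupp : ∀ i, 0 < P i → 0 < Q i) :
    ∑ i ∈ Finset.univ.filter (fun i => 0 < P i), P i * Real.log (P i / Q i)
      ≥ ∑ i, (P i - Q i) ^ 2 := by
  have hvanish : ∀ i, ¬ 0 < Q i → P i = 0 ∧ Q i = 0 := fun i h =>
    ⟨not_not.1 fun hp => h (hsupp i ((hP i).lt_of_ne' hp)), le_antisymm (not_lt.1 h) (hQ i)⟩
  set s := univ.filter (fun i => 0 < Q i)
  have sum_restrict : ∀ f : Fin n → ℝ, (∀ i, P i = 0 → Q i = 0 → f i = 0) →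
      ∑ i ∈ s, f i = ∑ i, f i := fun f hf =>
    sum_filter_of_ne fun i _ hfi => by_contra fun h => hfi (hf i (hvanish i h).1 (hvanish i h).2)
  have hPs' : ∑ i ∈ s, P i = 1 := by rw [sum_restrict P fun i hp _ => hp, hPs]
  have hQs' : ∑ i ∈ s, Q i = 1 := by rw [sum_restrict Q fun i _ hq => hq, hQs]
  have hKL : ∑ i ∈ univ.filter (fun i => 0 < P i), P i * log (P i / Q i)
      = ∑ i ∈ s, P i * log (P i / Q i) := by
    rw [sum_restrict _ fun i hp _ => by simp [hp]]
    exact sum_filter_of_ne fun i _ h => (hP i).lt_of_ne' (left_ne_zero_of_mul h)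
  calc ∑ i, (P i - Q i) ^ 2 = ∑ i ∈ s, (P i - Q i) ^ 2 :=
        (sum_restrict _ fun i hp hq => by simp [hp, hq]).symm
    _ ≤ (∑ i ∈ s, |P i - Q i|) ^ 2 / 2 :=
        sum_sq_le_sq_sum_abs_div_two (by rw [sum_sub_distrib, hPs', hQs', sub_self])
    _ ≤ ∑ i ∈ s, P i * log (P i / Q i) :=
        sq_sum_abs_sub_div_two_le_sum_mul_log_div (fun i _ => hP i)
          (fun i hi => (mem_filter.1 hi).2) hPs' hQs'
    _ = _ := hKL.symm
end

section
/- Let S be a symmetric positive definite n×n matrix. Then on each face of the standard simplex (the set of probability vectors with a prescribed support), there is at most one point X with full prescribed support satisfying the fixed-point condition: X(i) > 0 implies (SX)_i = X · SX for all i. Consequently, the set of fixed points of (S,S) in the standard simplex is finite. -/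
open Matrix

theorem support_eq_setOf_pos {ι M : Type*} [Zero M] [PartialOrder M] {X : ι → M}
    (hX : ∀ i, 0 ≤ X i) :
    Function.support X = {i | 0 < X i} :=
  Set.ext fun i => ((hX i).lt_iff_ne').symm

variable {ι : Type*} [Fintype ι]

theorem dotProduct_eq_of_forall_ne_zero {R : Type*} [Semiring R] {W V : ι → R} {e : R}
    (hW : ∑ i, W i = 1) (hV : ∀ i, W i ≠ 0 → V i = e) : W ⬝ᵥ V = e := by
  have hterm : ∀ i, W i * V i = W i * e := by
    intro i
    by_cases h : W i = 0
    · simp [h]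
    · rw [hV i h]
  calc W ⬝ᵥ V = ∑ i, W i * e := Finset.sum_congr rfl fun i _ => hterm i
    _ = e := by rw [← Finset.sum_mul, hW, one_mul]

/-- Averaging over the common support gives `X ⬝ᵥ S *ᵥ X = Y ⬝ᵥ S *ᵥ X = c` and
`X ⬝ᵥ S *ᵥ Y = Y ⬝ᵥ S *ᵥ Y = d`, so the quadratic form of `S` vanishes at `X - Y`. -/
theorem Matrix.PosDef.eq_of_support_eq_of_mulVec_const {S : Matrix ι ι ℝ} (hS : S.PosDef)
    {X Y : ι → ℝ} {c d : ℝ} (hX : ∑ i, X i = 1) (hY : ∑ i, Y i = 1)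
    (hsupp : Function.support X = Function.support Y)
    (hSX : ∀ i ∈ Function.support X, (S *ᵥ X) i = c)
    (hSY : ∀ i ∈ Function.support Y, (S *ᵥ Y) i = d) : X = Y := by
  have hXSX : X ⬝ᵥ S *ᵥ X = c := dotProduct_eq_of_forall_ne_zero hX hSX
  have hXSY : X ⬝ᵥ S *ᵥ Y = d :=
    dotProduct_eq_of_forall_ne_zero hX fun i hi => hSY i (hsupp ▸ hi)
  have hYSX : Y ⬝ᵥ S *ᵥ X = c :=
    dotProduct_eq_of_forall_ne_zero hY fun i hi => hSX i (hsupp ▸ hi)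
  have hYSY : Y ⬝ᵥ S *ᵥ Y = d := dotProduct_eq_of_forall_ne_zero hY hSY
  have hquad : (X - Y) ⬝ᵥ S *ᵥ (X - Y) = 0 := by
    rw [mulVec_sub, dotProduct_sub, sub_dotProduct, sub_dotProduct, hXSX, hXSY, hYSX, hYSY]
    ring
  by_contra hne
  have hpos := hS.dotProduct_mulVec_pos (sub_ne_zero.mpr hne)
  simp only [star_trivial, hquad, lt_irrefl] at hpos

def IsSimplexFixedPoint (S : Matrix ι ι ℝ) (X : ι → ℝ) : Prop :=
  (∀ i, 0 ≤ X i) ∧ ∑ i, X i = 1 ∧ ∀ i, 0 < X i → (S *ᵥ X) i = X ⬝ᵥ S *ᵥ X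

theorem IsSimplexFixedPoint.mulVec_eq_of_mem_support {S : Matrix ι ι ℝ} {X : ι → ℝ}
    (hX : IsSimplexFixedPoint S X) {i : ι} (hi : i ∈ Function.support X) :
    (S *ᵥ X) i = X ⬝ᵥ S *ᵥ X :=
  hX.2.2 i ((hX.1 i).lt_of_ne' hi)

theorem IsSimplexFixedPoint.eq_of_support_eq {S : Matrix ι ι ℝ} (hS : S.PosDef) {X Y : ι → ℝ}
    (hX : IsSimplexFixedPoint S X) (hY : IsSimplexFixedPoint S Y)
    (hsupp : Function.support X = Function.support Y) : X = Y :=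
  hS.eq_of_support_eq_of_mulVec_const hX.2.1 hY.2.1 hsupp
    (fun _ hi => hX.mulVec_eq_of_mem_support hi) (fun _ hi => hY.mulVec_eq_of_mem_support hi)

theorem stmt8_general (n : ℕ) (S : Matrix (Fin n) (Fin n) ℝ)
    (hpd : S.PosDef) :
    (∀ supp : Finset (Fin n), ∀ X Y : Fin n → ℝ,
        (∀ i, 0 ≤ X i) → (∑ i, X i = 1) →
        (∀ i, 0 ≤ Y i) → (∑ i, Y i = 1) →
        (∀ i, 0 < X i ↔ i ∈ supp) → (∀ i, 0 < Y i ↔ i ∈ supp) →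
        (∀ i, 0 < X i → S.mulVec X i = ∑ j, X j * S.mulVec X j) →
        (∀ i, 0 < Y i → S.mulVec Y i = ∑ j, Y j * S.mulVec Y j) →
        X = Y) ∧
    {X : Fin n → ℝ | (∀ i, 0 ≤ X i) ∧ (∑ i, X i = 1) ∧
        (∀ i, 0 < X i → S.mulVec X i = ∑ j, X j * S.mulVec X j)}.Finite := by
  refine ⟨fun supp X Y hX0 hX1 hY0 hY1 hXs hYs hXf hYf => ?_, ?_⟩
  · refine IsSimplexFixedPoint.eq_of_support_eq hpd ⟨hX0, hX1, hXf⟩ ⟨hY0, hY1, hYf⟩ ?_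
    rw [support_eq_setOf_pos hX0, support_eq_setOf_pos hY0]
    ext i
    exact (hXs i).trans (hYs i).symm
  · have hinj : Set.InjOn Function.support {X | IsSimplexFixedPoint S X} :=
      fun _ hX _ hY hsupp => hX.eq_of_support_eq hpd hY hsupp
    exact Set.Finite.of_finite_image (Set.toFinite _) hinj

theorem stmt8 (n : ℕ) (S : Matrix (Fin n) (Fin n) ℝ)
    (hsym : S.IsSymm) (hpd : S.PosDef) :
    (∀ supp : Finset (Fin n), ∀ X Y : Fin n → ℝ,
        (∀ i, 0 ≤ X i) → (∑ i, X i = 1) →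
        (∀ i, 0 ≤ Y i) → (∑ i, Y i = 1) →
        (∀ i, 0 < X i ↔ i ∈ supp) → (∀ i, 0 < Y i ↔ i ∈ supp) →
        (∀ i, 0 < X i → S.mulVec X i = ∑ j, X j * S.mulVec X j) →
        (∀ i, 0 < Y i → S.mulVec Y i = ∑ j, Y j * S.mulVec Y j) →
        X = Y) ∧
    {X : Fin n → ℝ | (∀ i, 0 ≤ X i) ∧ (∑ i, X i = 1) ∧
        (∀ i, 0 < X i → S.mulVec X i = ∑ j, X j * S.mulVec X j)}.Finite :=
  stmt8_general n S hpd
end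

section
/- Let C be an n×n real matrix and let X, X' be two fixed points of the symmetric bimatrix game (C, Cᵀ) having the same support. Then for every ε ∈ [0,1], X_ε = (1−ε)X + εX' is also a fixed point of (C, Cᵀ). -/
theorem stmt10 (n : ℕ) (C : Matrix (Fin n) (Fin n) ℝ) (X X' : Fin n → ℝ)
    (hX : ∀ i, 0 ≤ X i) (hXs : ∑ i, X i = 1)
    (hX' : ∀ i, 0 ≤ X' i) (hX's : ∑ i, X' i = 1)
    (hsupp : ∀ i, 0 < X i ↔ 0 < X' i)
    (hfix : ∀ i, 0 < X i → C.mulVec X i = ∑ j, X j * C.mulVec X j)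
    (hfix' : ∀ i, 0 < X' i → C.mulVec X' i = ∑ j, X' j * C.mulVec X' j)
    (ε : ℝ) (hε0 : 0 ≤ ε) (hε1 : ε ≤ 1) :
    ∀ i, 0 < ((1 - ε) • X + ε • X') i →
      C.mulVec ((1 - ε) • X + ε • X') i
        = ∑ j, ((1 - ε) • X + ε • X') j
            * C.mulVec ((1 - ε) • X + ε • X') j := by
  set Y : Fin n → ℝ := (1 - ε) • X + ε • X' with hY
  have hYdef : ∀ k, Y k = (1 - ε) * X k + ε * X' k := by
    intro k; simp [hY, smul_eq_mul]
  have hmv : ∀ k, C.mulVec Y k = (1 - ε) * C.mulVec X k + ε * C.mulVec X' k := by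
    intro k
    simp [hY, Matrix.mulVec_add, Matrix.mulVec_smul, smul_eq_mul]
  have hYnn : ∀ k, 0 ≤ Y k := by
    intro k
    rw [hYdef]
    have := hX k; have := hX' k
    nlinarith
  have hpos : ∀ k, 0 < Y k ↔ 0 < X k := by
    intro k
    rw [hYdef]
    constructor
    · intro hk
      by_contra h
      have hx0 : X k = 0 := le_antisymm (not_lt.mp h) (hX k)
      have hx'0 : X' k = 0 := by
        by_contra h'
        exact h ((hsupp k).mpr (lt_of_le_of_ne (hX' k) (Ne.symm h')))
      simp [hx0, hx'0] at hk
    · intro hk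
      have hk' := (hsupp k).mp hk
      rcases eq_or_lt_of_le hε0 with h | h
      · rw [← h]; simpa using hk
      · nlinarith [mul_pos h hk', mul_nonneg (sub_nonneg.mpr hε1) hk.le]
  set v := ∑ j, X j * C.mulVec X j with hv
  set v' := ∑ j, X' j * C.mulVec X' j with hv'
  have key : ∀ k, 0 < Y k → C.mulVec Y k = (1 - ε) * v + ε * v' := by
    intro k hk
    have hXk := (hpos k).mp hk
    rw [hmv, hfix k hXk, hfix' k ((hsupp k).mp hXk)]
  intro i hi
  rw [key i hi]
  have hsum : ∑ j, Y j * C.mulVec Y j = ((1 - ε) * v + ε * v') * ∑ j, Y j := by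
    rw [Finset.mul_sum]
    refine Finset.sum_congr rfl fun j _ => ?_
    rcases lt_or_eq_of_le (hYnn j) with h | h
    · rw [key j h]; ring
    · rw [← h]; ring
  have hYs : ∑ j, Y j = 1 := by
    simp only [hYdef]
    rw [Finset.sum_add_distrib, ← Finset.mul_sum, ← Finset.mul_sum, hXs, hX's]
    ring
  rw [hsum, hYs, mul_one]
end

section
/- Let X be a probability vector with full support (X(i) > 0 for all i), B ∈ R^n, and consider the map G(α) = 1/(4α²) − (Σ_i X(i) B_i exp(α B_i))/(Σ_i X(i) exp(α B_i)) for α > 0. If max_i B_i ≥ 0, then there exists a unique α* ∈ (0, ∞] with G(α*) = 0 in the extended sense: either a unique finite positive root, or G(α) > 0 for all finite α (root at infinity); moreover G is strictly decreasing on (0, ∞). -/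
theorem stmt16 (n : ℕ) [NeZero n] (X B : Fin n → ℝ)
    (hX : ∀ i, 0 < X i) (hXs : ∑ i, X i = 1)
    (hB : 0 ≤ Finset.univ.sup' Finset.univ_nonempty B)
    (G : ℝ → ℝ)
    (hG : G = fun α => 1 / (4 * α ^ 2)
        - (∑ i, X i * B i * Real.exp (α * B i))
            / (∑ i, X i * Real.exp (α * B i))) :
    StrictAntiOn G (Set.Ioi 0) ∧
      ((∃! α : ℝ, α ∈ Set.Ioi (0 : ℝ) ∧ G α = 0) ∨ ∀ α > (0 : ℝ), 0 < G α) := by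
  set M := Finset.univ.sup' Finset.univ_nonempty B with hM
  set S : ℝ → ℝ := fun α => ∑ i, X i * Real.exp (α * B i) with hS
  set T : ℝ → ℝ := fun α => ∑ i, X i * B i * Real.exp (α * B i) with hT
  have hSpos : ∀ α : ℝ, 0 < S α := fun α =>
    Finset.sum_pos (fun i _ => mul_pos (hX i) (Real.exp_pos _)) Finset.univ_nonempty
  -- expansion of products of sums
  have expand : ∀ γ δ : ℝ, T γ * S δ =
      ∑ i, ∑ j, X i * X j * B i * Real.exp (γ * B i + δ * B j) := by
    intro γ δ
    rw [hT, hS, Finset.sum_mul_sum]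
    refine Finset.sum_congr rfl fun i _ => Finset.sum_congr rfl fun j _ => ?_
    rw [Real.exp_add]; ring
  -- key correlation inequality
  have key : ∀ α β : ℝ, α ≤ β → T α * S β ≤ T β * S α := by
    intro α β hab
    have h2 : (0:ℝ) ≤ ∑ i, ∑ j, X i * X j * (B i - B j) *
        (Real.exp (β * B i + α * B j) - Real.exp (α * B i + β * B j)) := by
      refine Finset.sum_nonneg fun i _ => Finset.sum_nonneg fun j _ => ?_
      rcases le_total (B j) (B i) with h | h
      · refine mul_nonneg (mul_nonneg (mul_nonneg (hX i).le (hX j).le) (by linarith)) ?_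
        have : α * B i + β * B j ≤ β * B i + α * B j := by nlinarith
        have := Real.exp_le_exp.mpr this
        linarith
      · have h1 : X i * X j * (B i - B j) ≤ 0 :=
          mul_nonpos_of_nonneg_of_nonpos (mul_nonneg (hX i).le (hX j).le) (by linarith)
        have h3 : β * B i + α * B j ≤ α * B i + β * B j := by nlinarith
        have h4 := Real.exp_le_exp.mpr h3
        nlinarith [h1, h4]
    have hswap1 : ∑ i, ∑ j, X i * X j * B j * Real.exp (β * B i + α * B j)
        = ∑ i, ∑ j, X i * X j * B i * Real.exp (α * B i + β * B j) := by
      rw [Finset.sum_comm]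
      refine Finset.sum_congr rfl fun i _ => Finset.sum_congr rfl fun j _ => ?_
      ring_nf
    have hswap2 : ∑ i, ∑ j, X i * X j * B j * Real.exp (α * B i + β * B j)
        = ∑ i, ∑ j, X i * X j * B i * Real.exp (β * B i + α * B j) := by
      rw [Finset.sum_comm]
      refine Finset.sum_congr rfl fun i _ => Finset.sum_congr rfl fun j _ => ?_
      ring_nf
    have hsplit : ∑ i, ∑ j, X i * X j * (B i - B j) *
        (Real.exp (β * B i + α * B j) - Real.exp (α * B i + β * B j))
        = (∑ i, ∑ j, X i * X j * B i * Real.exp (β * B i + α * B j))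
          - (∑ i, ∑ j, X i * X j * B i * Real.exp (α * B i + β * B j))
          - (∑ i, ∑ j, X i * X j * B j * Real.exp (β * B i + α * B j))
          + (∑ i, ∑ j, X i * X j * B j * Real.exp (α * B i + β * B j)) := by
      rw [← Finset.sum_sub_distrib, ← Finset.sum_sub_distrib, ← Finset.sum_add_distrib]
      refine Finset.sum_congr rfl fun i _ => ?_
      rw [← Finset.sum_sub_distrib, ← Finset.sum_sub_distrib, ← Finset.sum_add_distrib]
      refine Finset.sum_congr rfl fun j _ => by ring
    rw [expand α β, expand β α]
    rw [hsplit, hswap1, hswap2] at h2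
    linarith
  -- monotonicity of the Gibbs average
  have hA : ∀ α β : ℝ, α ≤ β → T α / S α ≤ T β / S β := by
    intro α β hab
    rw [div_le_div_iff₀ (hSpos α) (hSpos β)]
    exact key α β hab
  have hGdef : ∀ α : ℝ, G α = 1 / (4 * α ^ 2) - T α / S α := by
    intro α; rw [hG]
  -- strict antitonicity
  have hanti : StrictAntiOn G (Set.Ioi 0) := by
    intro a ha b hb hab
    simp only [Set.mem_Ioi] at ha hb
    rw [hGdef a, hGdef b]
    have h1 : 1 / (4 * b ^ 2) < 1 / (4 * a ^ 2) := by
      apply one_div_lt_one_div_of_lt (by positivity)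
      nlinarith
    have h2 := hA a b hab.le
    linarith
  refine ⟨hanti, ?_⟩
  -- bound on Gibbs average
  have hBM : ∀ i, B i ≤ M := fun i => Finset.le_sup' B (Finset.mem_univ i)
  have hAle : ∀ α : ℝ, T α / S α ≤ M := by
    intro α
    rw [div_le_iff₀ (hSpos α), hT, hS, Finset.mul_sum]
    refine Finset.sum_le_sum fun i _ => ?_
    nlinarith [mul_nonneg (mul_pos (hX i) (Real.exp_pos (α * B i))).le (sub_nonneg.mpr (hBM i))]
  -- positivity near 0
  have hsmall : ∀ α : ℝ, 0 < α → α ≤ 1 / (4 * (M + 1)) → 0 < G α := by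
    intro α hα hle
    rw [hGdef α]
    have hAb := hAle α
    have hM1 : (0:ℝ) < M + 1 := by linarith
    have h4 : 4 * (M + 1) * α ≤ 1 := by
      rw [le_div_iff₀ (by positivity)] at hle; linarith
    have hα1 : α ≤ 1 := by nlinarith
    have hsq : 4 * α ^ 2 * (M + 1) ≤ α := by nlinarith
    have : M + 1 ≤ 1 / (4 * α ^ 2) := by
      rw [le_div_iff₀ (by positivity)]
      nlinarith
    linarith
  -- continuity
  have hTc : Continuous T := by
    rw [hT]; exact continuous_finset_sum _ fun i _ => by fun_prop
  have hSc : Continuous S := by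
    rw [hS]; exact continuous_finset_sum _ fun i _ => by fun_prop
  have hGc : ContinuousOn G (Set.Ioi 0) := by
    rw [hG]
    apply ContinuousOn.sub
    · apply ContinuousOn.div continuousOn_const (by fun_prop)
      intro x hx
      have : (0:ℝ) < x := hx
      positivity
    · exact (hTc.continuousOn.div hSc.continuousOn fun x _ => (hSpos x).ne')
  by_cases hroot : ∃ α : ℝ, α ∈ Set.Ioi (0:ℝ) ∧ G α = 0
  · left
    obtain ⟨a, ha, hGa⟩ := hroot
    exact ⟨a, ⟨ha, hGa⟩, fun b ⟨hb, hGb⟩ => hanti.injOn hb ha (hGb.trans hGa.symm)⟩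
  · right
    intro α hα
    rcases lt_trichotomy (G α) 0 with hneg | hz | hpos
    · exfalso
      have hMpos : (0:ℝ) < M + 1 := by linarith
      set a₁ : ℝ := min (α / 2) (1 / (4 * (M + 1))) with ha₁
      have ha₁pos : 0 < a₁ := lt_min (by linarith) (by positivity)
      have ha₁lt : a₁ < α := lt_of_le_of_lt (min_le_left _ _) (by linarith)
      have hGa₁ : 0 < G a₁ := hsmall a₁ ha₁pos (min_le_right _ _)
      have hsub : Set.Icc a₁ α ⊆ Set.Ioi 0 := fun x hx => lt_of_lt_of_le ha₁pos hx.1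
      have hivt := intermediate_value_Icc' ha₁lt.le (hGc.mono hsub)
      have h0mem : (0:ℝ) ∈ Set.Icc (G α) (G a₁) := ⟨hneg.le, hGa₁.le⟩
      obtain ⟨c, hc, hGc0⟩ := hivt h0mem
      exact hroot ⟨c, hsub hc, hGc0⟩
    · exact absurd ⟨α, hα, hz⟩ hroot
    · exact hpos
end
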